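/- Let B be a classical crystal with an energy function H, and let B^aff be its affinization with affine energy function H^aff(a(m) ⊗ b(n)) = H(a ⊗ b) + m − n. Then H^aff is constant on each connected component of the crystal B^aff ⊗ B^aff. -/

import Mathlib

/-!
Statement 17: Let `B` be a classical crystal with an energy function `H`, and let
`B^aff` be its affinization with affine energy function
`H^aff(a(m) ⊗ b(n)) = H(a ⊗ b) + m - n`.  Then `H^aff` is constant on each connected
component of the crystal `B^aff ⊗ B^aff`.
-/

namespace Stmt17

/-- A classical crystal for an affine Cartan datum with index set `I`, weight lattice
`P̄ = P`, pairing `⟨hᵢ, ·⟩` and simple roots `αᵢ`, satisfying Kashiwara's crystal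
axioms.  `εᵢ, φᵢ` take values in `ℤ ∪ {-∞} = WithBot ℤ`. -/
structure CCrystal (I : Type*) (P : Type*) [AddCommGroup P] where
  /-- the underlying set of the crystal -/
  B : Type*
  wt : B → P
  eK : I → B → Option B
  fK : I → B → Option B
  ε : I → B → WithBot ℤ
  φ : I → B → WithBot ℤ
  /-- the pairing `⟨hᵢ, ·⟩` with the simple coroots -/
  pairing : I → P → ℤ
  /-- the simple roots `αᵢ` -/
  alpha : I → P
  ax_phi_eps : ∀ i b, φ i b = ε i b + ((pairing i (wt b) : ℤ) : WithBot ℤ)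
  ax_wt_e : ∀ i b b', eK i b = some b' → wt b' = wt b + alpha i
  ax_wt_f : ∀ i b b', fK i b = some b' → wt b' = wt b - alpha i
  ax_eps_e : ∀ i b b', eK i b = some b' → ε i b' + 1 = ε i b ∧ φ i b' = φ i b + 1
  ax_eps_f : ∀ i b b', fK i b = some b' → ε i b' = ε i b + 1 ∧ φ i b' + 1 = φ i b
  ax_ef : ∀ i b b', fK i b = some b' ↔ eK i b' = some b
  ax_bot : ∀ i b, φ i b = ⊥ → eK i b = none ∧ fK i b = none

variable {I : Type*} {P : Type*} [AddCommGroup P] [DecidableEq I]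

/-- The Kashiwara operator `f̃ᵢ` on the tensor product `B ⊗ B`:
`f̃ᵢ(b₁ ⊗ b₂) = f̃ᵢ b₁ ⊗ b₂` if `φᵢ(b₁) > εᵢ(b₂)`, else `b₁ ⊗ f̃ᵢ b₂`. -/
noncomputable def tensF (C : CCrystal I P) (i : I) (p : C.B × C.B) : Option (C.B × C.B) :=
  if C.ε i p.2 < C.φ i p.1 then (C.fK i p.1).map fun b => (b, p.2)
  else (C.fK i p.2).map fun b => (p.1, b)

/-- `H` is an energy function on `B ⊗ B` (with distinguished affine index `i0 = 0`):
whenever `f̃ᵢ(b₁ ⊗ b₂)` lies in `B ⊗ B`, `H` is unchanged for `i ≠ 0`, decreases by 1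
for `i = 0` with `φ₀(b₁) > ε₀(b₂)`, and increases by 1 for `i = 0` with
`φ₀(b₁) ≤ ε₀(b₂)`. -/
def IsEnergy (C : CCrystal I P) (i0 : I) (H : C.B → C.B → ℤ) : Prop :=
  ∀ (i : I) (p q : C.B × C.B), tensF C i p = some q →
    H q.1 q.2 = H p.1 p.2 +
      (if i = i0 then (if C.ε i p.2 < C.φ i p.1 then (-1 : ℤ) else 1) else 0)

/-- The Kashiwara operator `f̃ᵢ` on the affinization `B^aff`:
`f̃ᵢ(b(n)) = (f̃ᵢ b)(n + δ_{i,0})`. -/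
def affF (C : CCrystal I P) (i0 i : I) (x : C.B × ℤ) : Option (C.B × ℤ) :=
  (C.fK i x.1).map fun b => (b, x.2 + (if i = i0 then 1 else 0))

/-- The Kashiwara operator `ẽᵢ` on the affinization `B^aff`:
`ẽᵢ(b(n)) = (ẽᵢ b)(n - δ_{i,0})`. -/
def affE (C : CCrystal I P) (i0 i : I) (x : C.B × ℤ) : Option (C.B × ℤ) :=
  (C.eK i x.1).map fun b => (b, x.2 - (if i = i0 then 1 else 0))

/-- The Kashiwara operator `f̃ᵢ` on `B^aff ⊗ B^aff` (tensor product rule; note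
`εᵢ(b(n)) = εᵢ(b)` and `φᵢ(b(n)) = φᵢ(b)`). -/
noncomputable def tensAffF (C : CCrystal I P) (i0 i : I) (p : (C.B × ℤ) × (C.B × ℤ)) :
    Option ((C.B × ℤ) × (C.B × ℤ)) :=
  if C.ε i p.2.1 < C.φ i p.1.1 then (affF C i0 i p.1).map fun x => (x, p.2)
  else (affF C i0 i p.2).map fun x => (p.1, x)

/-- The Kashiwara operator `ẽᵢ` on `B^aff ⊗ B^aff` (tensor product rule). -/
noncomputable def tensAffE (C : CCrystal I P) (i0 i : I) (p : (C.B × ℤ) × (C.B × ℤ)) :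
    Option ((C.B × ℤ) × (C.B × ℤ)) :=
  if C.ε i p.2.1 ≤ C.φ i p.1.1 then (affE C i0 i p.1).map fun x => (x, p.2)
  else (affE C i0 i p.2).map fun x => (p.1, x)

/-- One application of a Kashiwara operator `ẽᵢ` or `f̃ᵢ` on `B^aff ⊗ B^aff`;
connected components are taken with respect to this relation. -/
def tensRel (C : CCrystal I P) (i0 : I) (p q : (C.B × ℤ) × (C.B × ℤ)) : Prop :=
  ∃ i, tensAffF C i0 i p = some q ∨ tensAffE C i0 i p = some q

/-- The affine energy function `H^aff(a(m) ⊗ b(n)) = H(a ⊗ b) + m - n`. -/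
def Haff (C : CCrystal I P) (H : C.B → C.B → ℤ) (p : (C.B × ℤ) × (C.B × ℤ)) : ℤ :=
  H p.1.1 p.2.1 + p.1.2 - p.2.2

end Stmt17

/-!
On the ℤ-coordinates, `f̃₀` raises the degree of the factor it acts on by one, so it changes
`m - n` by `+1` when it acts on the left factor (`φ₀(b₁) > ε₀(b₂)`) and by `-1` otherwise: exactly
the opposite of the change of `H` prescribed for an energy function. Hence `H^aff` is invariant
under every `f̃ᵢ`, and also under every `ẽᵢ`, since by the tensor product rule `ẽᵢ` on
`B^aff ⊗ B^aff` is undone by `f̃ᵢ`.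
-/

lemma WithBot.le_of_lt_add_one {α : Type*} [LinearOrder α] [AddMonoidWithOne α] [SuccAddOrder α]
    [NoMaxOrder α] {a b : WithBot α} (h : a < b + 1) : a ≤ b := by
  induction b with
  | bot => simp at h
  | coe b =>
    induction a with
    | bot => exact bot_le
    | coe a => exact WithBot.coe_le_coe.2 (Order.le_of_lt_add_one (WithBot.coe_lt_coe.1 h))

lemma WithBot.lt_add_one_of_le {α : Type*} [LinearOrder α] [AddMonoidWithOne α] [SuccAddOrder α]
    [NoMaxOrder α] {a b : WithBot α} (h : a ≤ b) (hb : b ≠ ⊥) : a < b + 1 := by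
  lift b to α using hb
  exact h.trans_lt (WithBot.coe_lt_coe.2 (Order.lt_add_one_iff.2 le_rfl))

namespace Stmt17

namespace CCrystal

variable {I : Type*} {P : Type*} [AddCommGroup P] (C : CCrystal I P)

lemma φ_ne_bot_of_eK_eq_some {i : I} {b b' : C.B} (h : C.eK i b = some b') : C.φ i b ≠ ⊥ :=
  fun hb => by simp [(C.ax_bot i b hb).1] at h

end CCrystal

variable {I : Type*} {P : Type*} [AddCommGroup P] [DecidableEq I] {C : CCrystal I P} {i0 : I}

lemma tensAffF_eq_some {i : I} {p q : (C.B × ℤ) × (C.B × ℤ)} (h : tensAffF C i0 i p = some q) :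
    tensF C i (p.1.1, p.2.1) = some (q.1.1, q.2.1) ∧
      q.1.2 - q.2.2 = p.1.2 - p.2.2 -
        if i = i0 then (if C.ε i p.2.1 < C.φ i p.1.1 then (-1 : ℤ) else 1) else 0 := by
  unfold tensAffF affF at h
  unfold tensF
  split_ifs at h ⊢ <;>
    simp only [Option.map_map, Option.map_eq_some_iff] at h <;>
    obtain ⟨b, hb, rfl⟩ := h <;> simp [hb] <;> ring

lemma Haff_tensAffF {H : C.B → C.B → ℤ} (hH : IsEnergy C i0 H) {i : I}
    {p q : (C.B × ℤ) × (C.B × ℤ)} (h : tensAffF C i0 i p = some q) :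
    Haff C H p = Haff C H q := by
  obtain ⟨hf, hdeg⟩ := tensAffF_eq_some h
  have hHq := hH i _ _ hf
  dsimp only at hHq
  simp only [Haff]
  linarith

lemma tensAffF_of_tensAffE {i : I} {p q : (C.B × ℤ) × (C.B × ℤ)}
    (h : tensAffE C i0 i p = some q) : tensAffF C i0 i q = some p := by
  unfold tensAffE affE at h
  by_cases hc : C.ε i p.2.1 ≤ C.φ i p.1.1
  · simp only [hc, if_true, Option.map_map, Option.map_eq_some_iff] at h
    obtain ⟨b, he, rfl⟩ := h
    have hφ : C.φ i b = C.φ i p.1.1 + 1 := (C.ax_eps_e i p.1.1 b he).2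
    have hcond : C.ε i p.2.1 < C.φ i b :=
      hφ ▸ WithBot.lt_add_one_of_le hc (C.φ_ne_bot_of_eK_eq_some he)
    simp [tensAffF, affF, hcond, (C.ax_ef i b p.1.1).2 he]
  · simp only [hc, if_false, Option.map_map, Option.map_eq_some_iff] at h
    obtain ⟨b, he, rfl⟩ := h
    have hε : C.ε i b + 1 = C.ε i p.2.1 := (C.ax_eps_e i p.2.1 b he).1
    have hcond : ¬ C.ε i b < C.φ i p.1.1 :=
      not_lt.2 (WithBot.le_of_lt_add_one (hε ▸ not_le.1 hc))
    simp [tensAffF, affF, hcond, (C.ax_ef i b p.2.1).2 he]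

/-- The affine energy function `H^aff` is constant on each connected
component of `B^aff ⊗ B^aff`. -/
theorem affine_energy_constant_on_components (C : CCrystal I P) (i0 : I)
    (H : C.B → C.B → ℤ) (hH : IsEnergy C i0 H)
    (p q : (C.B × ℤ) × (C.B × ℤ)) (h : Relation.EqvGen (tensRel C i0) p q) :
    Haff C H p = Haff C H q := by
  have hstep : ∀ a b, tensRel C i0 a b → Haff C H a = Haff C H b := by
    rintro a b ⟨i, hF | hE⟩
    · exact Haff_tensAffF hH hF
    · exact (Haff_tensAffF hH (tensAffF_of_tensAffE hE)).symm
  exact (InvImage.equivalence _ (Haff C H) eq_equivalence).eqvGen_iff.1 (h.mono hstep)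

end Stmt17
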